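/- Let q1, q2, q3 be nonzero complex numbers with q1·q2·q3 = 1, let 𝔮 be nonzero with 𝔮² = q3, fix integers λ_1,…,λ_n and μ_1,…,μ_m, nonzero complex numbers z_1,…,z_n and w_1,…,w_m, and an index 1 ≤ j ≤ m. Define G := ( ∏_{1≤i<i′≤n} 𝐀_{λ_i λ_{i′}}(z_i/z_{i′}) · ∏_{1≤l<i≤m} 𝐀_{μ_l μ_i}(w_l/(𝔮²·w_i)) ) / ( ∏_{s=1}^m ∏_{l=1}^n 𝐀_{μ_s λ_l}(𝔮·w_s/(𝔮²·z_l)) ), and let G′ be the same expression with w_j replaced by 𝔮^{−2}·w_j. Assume every series occurring in the 𝐀-factors of G and G′ and in the R-factors below converges absolutely. Then G′ = A_j^* · G, where A_j^* := ∏_{l=1}^{j−1} R_{μ_l μ_j}(w_l/w_j)^{−1} · ∏_{l=j+1}^m R_{μ_j μ_l}(𝔮^{−2}·w_j/w_l) · ∏_{k=1}^n R_{μ_j λ_k}(𝔮^{−1}·w_j/z_k)^{−1}. (This says the factorized correlation function of vector intertwiners solves the generalized quantum KZ equation in the dual variable w_j, with shift parameter p = 𝔮^{−2}.) -/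

import Mathlib

open Complex

/-- The summand of the series defining the vacuum two-point function `𝐀_{nm}(x)` of vector
intertwiners (index `r ≥ 1` is `r+1` here). -/
noncomputable def aSummand (q1 q2 : ℂ) (n m : ℤ) (x : ℂ) (r : ℕ) : ℂ :=
  (1 / ((r : ℂ) + 1)) * ((q1 ^ (n - m) * x)⁻¹) ^ (r + 1) * q1 ^ (r + 1) *
    (1 - q2 ^ (r + 1)) / (1 - q1 ^ (r + 1))

/-- `𝐀_{nm}(x) = exp( Σ_{r≥1} (1/r)(q1^{n-m} x)^{-r} q1^r (1-q2^r)/(1-q1^r) )`. -/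
noncomputable def aMat (q1 q2 : ℂ) (n m : ℤ) (x : ℂ) : ℂ :=
  Complex.exp (∑' r : ℕ, aSummand q1 q2 n m x r)

/-- The summand of the series defining the diagonal R-matrix eigenvalue `R_{nm}(x)`. -/
noncomputable def rSummand (q1 q2 q3 : ℂ) (n m : ℤ) (x : ℂ) (r : ℕ) : ℂ :=
  (1 / ((r : ℂ) + 1)) * ((q1 ^ (n - m) * x)⁻¹) ^ (r + 1) * q1 ^ (r + 1) *
    (1 - q2 ^ (r + 1)) * (1 - q3 ^ (r + 1)) / (1 - q1 ^ (r + 1))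

/-- `R_{nm}(x) = exp( -Σ_{r≥1} (1/r)(q1^{n-m} x)^{-r} q1^r (1-q2^r)(1-q3^r)/(1-q1^r) )`. -/
noncomputable def rMat (q1 q2 q3 : ℂ) (n m : ℤ) (x : ℂ) : ℂ :=
  Complex.exp (- ∑' r : ℕ, rSummand q1 q2 q3 n m x r)

/-- The factorized correlation function of vector intertwiners:
`G = (∏_{i<j} 𝐀_{λ_i λ_j}(z_i/z_j) · ∏_{l<i} 𝐀_{μ_l μ_i}(w_l/(𝔮² w_i))) /
(∏_j ∏_l 𝐀_{μ_j λ_l}(𝔮 w_j/(𝔮² z_l)))`. -/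
noncomputable def corrG (q1 q2 qq : ℂ) {n m : ℕ} (lam : Fin n → ℤ) (mu : Fin m → ℤ)
    (z : Fin n → ℂ) (w : Fin m → ℂ) : ℂ :=
  ((∏ p ∈ Finset.univ.filter (fun p : Fin n × Fin n => p.1 < p.2),
      aMat q1 q2 (lam p.1) (lam p.2) (z p.1 / z p.2)) *
    (∏ p ∈ Finset.univ.filter (fun p : Fin m × Fin m => p.1 < p.2),
      aMat q1 q2 (mu p.1) (mu p.2) (w p.1 / (qq ^ 2 * w p.2)))) /
  (∏ j : Fin m, ∏ l : Fin n, aMat q1 q2 (mu j) (lam l) (qq * w j / (qq ^ 2 * z l)))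

lemma rSummand_sub (q1 q2 q3 : ℂ) (n m : ℤ) (x : ℂ) (r : ℕ) :
    rSummand q1 q2 q3 n m x r
      = aSummand q1 q2 n m x r - aSummand q1 q2 n m (q3⁻¹ * x) r := by
  simp only [rSummand, aSummand, mul_inv, inv_inv, mul_pow]
  ring

lemma aMat_shift (q1 q2 q3 : ℂ) (n m : ℤ) (x : ℂ)
    (hx : Summable fun r : ℕ => ‖aSummand q1 q2 n m x r‖)
    (hx' : Summable fun r : ℕ => ‖aSummand q1 q2 n m (q3⁻¹ * x) r‖) :
    aMat q1 q2 n m (q3⁻¹ * x) = rMat q1 q2 q3 n m x * aMat q1 q2 n m x := by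
  have h : ∑' r : ℕ, rSummand q1 q2 q3 n m x r
      = (∑' r : ℕ, aSummand q1 q2 n m x r) - ∑' r : ℕ, aSummand q1 q2 n m (q3⁻¹ * x) r := by
    rw [← Summable.tsum_sub hx.of_norm hx'.of_norm]
    exact tsum_congr fun r => rSummand_sub q1 q2 q3 n m x r
  rw [aMat, rMat, aMat, ← Complex.exp_add, h]
  ring_nf

/-- the factorized correlation function of vector intertwiners solves the
generalized quantum KZ equation in the dual variable `w_j` with shift parameter `p = 𝔮^{-2}`. -/
theorem vector_qKZ_solution_dual
    (q1 q2 q3 : ℂ) (hq1 : q1 ≠ 0) (hq2 : q2 ≠ 0) (hq3 : q3 ≠ 0)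
    (hq : q1 * q2 * q3 = 1)
    (qq : ℂ) (hqq0 : qq ≠ 0) (hqq : qq ^ 2 = q3)
    {n m : ℕ} (lam : Fin n → ℤ) (mu : Fin m → ℤ)
    (z : Fin n → ℂ) (w : Fin m → ℂ)
    (hz : ∀ i, z i ≠ 0) (hw : ∀ j, w j ≠ 0)
    (j : Fin m)
    (w' : Fin m → ℂ) (hw' : w' = Function.update w j (qq ^ (-2 : ℤ) * w j))
    (hA1 : ∀ i i' : Fin n, i < i' →
      Summable (fun r : ℕ => ‖aSummand q1 q2 (lam i) (lam i') (z i / z i') r‖))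
    (hA2 : ∀ l i : Fin m, l < i →
      Summable (fun r : ℕ => ‖aSummand q1 q2 (mu l) (mu i) (w l / (qq ^ 2 * w i)) r‖))
    (hA2' : ∀ l i : Fin m, l < i →
      Summable (fun r : ℕ => ‖aSummand q1 q2 (mu l) (mu i) (w' l / (qq ^ 2 * w' i)) r‖))
    (hA3 : ∀ s : Fin m, ∀ l : Fin n,
      Summable (fun r : ℕ => ‖aSummand q1 q2 (mu s) (lam l) (qq * w s / (qq ^ 2 * z l)) r‖))
    (hA3' : ∀ s : Fin m, ∀ l : Fin n,
      Summable (fun r : ℕ => ‖aSummand q1 q2 (mu s) (lam l) (qq * w' s / (qq ^ 2 * z l)) r‖))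
    (hR1 : ∀ l : Fin m, l < j →
      Summable (fun r : ℕ => ‖rSummand q1 q2 q3 (mu l) (mu j) (w l / w j) r‖))
    (hR2 : ∀ l : Fin m, j < l →
      Summable (fun r : ℕ => ‖rSummand q1 q2 q3 (mu j) (mu l) (qq ^ (-2 : ℤ) * w j / w l) r‖))
    (hR3 : ∀ k : Fin n,
      Summable (fun r : ℕ => ‖rSummand q1 q2 q3 (mu j) (lam k) (qq ^ (-1 : ℤ) * w j / z k) r‖)) :
    corrG q1 q2 qq lam mu z w'
      = ((∏ l ∈ Finset.univ.filter (fun l : Fin m => l < j),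
            (rMat q1 q2 q3 (mu l) (mu j) (w l / w j))⁻¹) *
          (∏ l ∈ Finset.univ.filter (fun l : Fin m => j < l),
            rMat q1 q2 q3 (mu j) (mu l) (qq ^ (-2 : ℤ) * w j / w l)) *
          (∏ k : Fin n,
            (rMat q1 q2 q3 (mu j) (lam k) (qq ^ (-1 : ℤ) * w j / z k))⁻¹)) *
        corrG q1 q2 qq lam mu z w := by
  have hq2z : (qq : ℂ) ^ 2 ≠ 0 := pow_ne_zero _ hqq0
  have hzm2 : (qq : ℂ) ^ (-2 : ℤ) = (qq ^ 2)⁻¹ := by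
    rw [show (-2 : ℤ) = -(2 : ℤ) from rfl, zpow_neg, zpow_two, sq]
  have hzm1 : (qq : ℂ) ^ (-1 : ℤ) = qq⁻¹ := by
    rw [show (-1 : ℤ) = -(1 : ℤ) from rfl, zpow_neg, zpow_one]
  have hwj : w' j = (qq ^ 2)⁻¹ * w j := by
    rw [hw', Function.update_self, hzm2]
  have hwl : ∀ l, l ≠ j → w' l = w l := fun l hl => by
    rw [hw', Function.update_of_ne hl]
  -- abbreviations
  set c2a := ∏ l ∈ Finset.univ.filter (fun l : Fin m => l < j),
      (rMat q1 q2 q3 (mu l) (mu j) (w l / w j))⁻¹ with hc2a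
  set c2b := ∏ l ∈ Finset.univ.filter (fun l : Fin m => j < l),
      rMat q1 q2 q3 (mu j) (mu l) (qq ^ (-2 : ℤ) * w j / w l) with hc2b
  set c3 := ∏ k : Fin n, rMat q1 q2 q3 (mu j) (lam k) (qq ^ (-1 : ℤ) * w j / z k) with hc3
  -- key step for the mu-mu pairs
  have step : ∀ p ∈ Finset.univ.filter (fun p : Fin m × Fin m => p.1 < p.2),
      aMat q1 q2 (mu p.1) (mu p.2) (w' p.1 / (qq ^ 2 * w' p.2))
        = ((if p.2 = j then (rMat q1 q2 q3 (mu p.1) (mu j) (w p.1 / w j))⁻¹ else 1) *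
            (if p.1 = j then rMat q1 q2 q3 (mu j) (mu p.2) (qq ^ (-2 : ℤ) * w j / w p.2)
              else 1)) *
          aMat q1 q2 (mu p.1) (mu p.2) (w p.1 / (qq ^ 2 * w p.2)) := by
    intro p hp
    have hp' : p.1 < p.2 := by simpa using hp
    rcases eq_or_ne p.2 j with h2 | h2
    · have h1 : p.1 ≠ j := h2 ▸ hp'.ne
      rw [if_pos h2, if_neg h1, mul_one]
      rw [hwl p.1 h1, h2, hwj, mul_inv_cancel_left₀ hq2z]
      have harg2 : w p.1 / (qq ^ 2 * w j) = q3⁻¹ * (w p.1 / w j) := by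
        rw [← hqq]; field_simp
      have hs1 : Summable fun r : ℕ => ‖aSummand q1 q2 (mu p.1) (mu j) (w p.1 / w j) r‖ := by
        have := hA2' p.1 p.2 hp'
        rwa [h2, hwl p.1 h1, hwj, mul_inv_cancel_left₀ hq2z] at this
      have hs2 : Summable fun r : ℕ =>
          ‖aSummand q1 q2 (mu p.1) (mu j) (q3⁻¹ * (w p.1 / w j)) r‖ := by
        have := hA2 p.1 p.2 hp'
        rwa [h2, harg2] at this
      have hsh := aMat_shift q1 q2 q3 (mu p.1) (mu j) (w p.1 / w j) hs1 hs2
      rw [harg2, hsh]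
      have hR : rMat q1 q2 q3 (mu p.1) (mu j) (w p.1 / w j) ≠ 0 := Complex.exp_ne_zero _
      field_simp
    · rcases eq_or_ne p.1 j with h1 | h1
      · rw [if_neg h2, if_pos h1, one_mul]
        rw [h1, hwj, hwl p.2 h2, hzm2]
        have harg1 : (qq ^ 2)⁻¹ * w j / (qq ^ 2 * w p.2)
            = q3⁻¹ * ((qq ^ 2)⁻¹ * w j / w p.2) := by
          rw [← hqq]; field_simp
        have harg2 : w j / (qq ^ 2 * w p.2) = (qq ^ 2)⁻¹ * w j / w p.2 := by
          field_simp
        have hs1 : Summable fun r : ℕ =>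
            ‖aSummand q1 q2 (mu j) (mu p.2) ((qq ^ 2)⁻¹ * w j / w p.2) r‖ := by
          have := hA2 p.1 p.2 hp'
          rwa [h1, harg2] at this
        have hs2 : Summable fun r : ℕ =>
            ‖aSummand q1 q2 (mu j) (mu p.2) (q3⁻¹ * ((qq ^ 2)⁻¹ * w j / w p.2)) r‖ := by
          have := hA2' p.1 p.2 hp'
          rwa [h1, hwj, hwl p.2 h2, harg1] at this
        have hsh := aMat_shift q1 q2 q3 (mu j) (mu p.2) ((qq ^ 2)⁻¹ * w j / w p.2) hs1 hs2
        rw [harg1, hsh, harg2]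
      · rw [if_neg h2, if_neg h1, mul_one, one_mul, hwl p.1 h1, hwl p.2 h2]
  -- numerator identity
  have key2 : (∏ p ∈ Finset.univ.filter (fun p : Fin m × Fin m => p.1 < p.2),
        aMat q1 q2 (mu p.1) (mu p.2) (w' p.1 / (qq ^ 2 * w' p.2)))
      = (c2a * c2b) *
        ∏ p ∈ Finset.univ.filter (fun p : Fin m × Fin m => p.1 < p.2),
          aMat q1 q2 (mu p.1) (mu p.2) (w p.1 / (qq ^ 2 * w p.2)) := by
    rw [Finset.prod_congr rfl step, Finset.prod_mul_distrib, Finset.prod_mul_distrib]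
    congr 2
    · rw [hc2a, Finset.prod_filter, Finset.prod_filter, Fintype.prod_prod_type]
      refine Finset.prod_congr rfl fun a _ => ?_
      have h : ∀ b : Fin m, (if a < b then
            (if b = j then (rMat q1 q2 q3 (mu a) (mu j) (w a / w j))⁻¹ else 1) else 1)
          = (if b = j then (if a < j then (rMat q1 q2 q3 (mu a) (mu j) (w a / w j))⁻¹ else 1)
              else 1) := by
        intro b; rcases eq_or_ne b j with rfl | hb
        · simp
        · simp [hb]
      simp only [h]
      simp
    · rw [hc2b, Finset.prod_filter, Finset.prod_filter, Fintype.prod_prod_type,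
        Finset.prod_comm]
      refine Finset.prod_congr rfl fun b _ => ?_
      have h : ∀ a : Fin m, (if a < b then
            (if a = j then rMat q1 q2 q3 (mu j) (mu b) (qq ^ (-2 : ℤ) * w j / w b) else 1)
              else 1)
          = (if a = j then
              (if j < b then rMat q1 q2 q3 (mu j) (mu b) (qq ^ (-2 : ℤ) * w j / w b) else 1)
              else 1) := by
        intro a; rcases eq_or_ne a j with rfl | ha
        · simp
        · simp [ha]
      simp only [h]
      simp
  -- denominator identity
  have step3 : ∀ s ∈ (Finset.univ : Finset (Fin m)),
      (∏ l : Fin n, aMat q1 q2 (mu s) (lam l) (qq * w' s / (qq ^ 2 * z l)))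
        = (if s = j then c3 else 1) *
          ∏ l : Fin n, aMat q1 q2 (mu s) (lam l) (qq * w s / (qq ^ 2 * z l)) := by
    intro s _
    rcases eq_or_ne s j with rfl | hs
    · rw [if_pos rfl, hc3, ← Finset.prod_mul_distrib]
      refine Finset.prod_congr rfl fun l _ => ?_
      rw [hwj, hzm1]
      have harg1 : qq * ((qq ^ 2)⁻¹ * w s) / (qq ^ 2 * z l)
          = q3⁻¹ * (qq⁻¹ * w s / z l) := by
        rw [← hqq]; field_simp [hqq0, hz l]
      have harg2 : qq * w s / (qq ^ 2 * z l) = qq⁻¹ * w s / z l := by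
        field_simp [hqq0, hz l]
      have hs1 : Summable fun r : ℕ =>
          ‖aSummand q1 q2 (mu s) (lam l) (qq⁻¹ * w s / z l) r‖ := by
        have := hA3 s l; rwa [harg2] at this
      have hs2 : Summable fun r : ℕ =>
          ‖aSummand q1 q2 (mu s) (lam l) (q3⁻¹ * (qq⁻¹ * w s / z l)) r‖ := by
        have := hA3' s l; rwa [hwj, harg1] at this
      have hsh := aMat_shift q1 q2 q3 (mu s) (lam l) (qq⁻¹ * w s / z l) hs1 hs2
      rw [harg1, hsh, harg2]
    · rw [if_neg hs, one_mul]
      exact Finset.prod_congr rfl fun l _ => by rw [hwl s hs]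
  have key3 : (∏ s : Fin m, ∏ l : Fin n, aMat q1 q2 (mu s) (lam l) (qq * w' s / (qq ^ 2 * z l)))
      = c3 * ∏ s : Fin m, ∏ l : Fin n, aMat q1 q2 (mu s) (lam l) (qq * w s / (qq ^ 2 * z l)) := by
    rw [Finset.prod_congr rfl step3, Finset.prod_mul_distrib]
    congr 1
    simp
  -- assemble
  have hc3ne : c3 ≠ 0 := by
    rw [hc3]; exact Finset.prod_ne_zero_iff.mpr fun k _ => Complex.exp_ne_zero _
  have hDne : (∏ s : Fin m, ∏ l : Fin n,
      aMat q1 q2 (mu s) (lam l) (qq * w s / (qq ^ 2 * z l))) ≠ 0 :=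
    Finset.prod_ne_zero_iff.mpr fun s _ =>
      Finset.prod_ne_zero_iff.mpr fun l _ => Complex.exp_ne_zero _
  rw [corrG, corrG, key2, key3, Finset.prod_inv_distrib, ← hc3]
  field_simp
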